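/- arXiv:0905.3863 — 3 statements merged into one kernel-verified Lean document; each statement's English description precedes it below -/
import Mathlib

section
/- Let y > 0 and δ > 0, and define the Poisson kernel P(t,y) = (1/π) · y/(y² + t²). Define P₁(t,y) = min(P(t,y), P(δ,y)). Then for all t ∈ ℝ, P₁(t,y) = ∫_δ^∞ (1/(2a)) · χ_{[-a,a]}(t) · φ_y(a) da, where φ_y(a) = -2a · (d/da) P₁(a,y). -/
/-!
For `a > δ` the kernel `φ a / (2a)` equals `-∂ₐP(a, y)`, and `t ∈ [-a, a]` means `a ≥ |t|`, so the
right-hand side is `∫ -∂ₐP(a, y) da` over `a > max δ |t|`. Since `P(·, y)` is even, decreasing on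
`[0, ∞)` and vanishes at infinity, this integral is `P(max δ |t|, y) = min (P(t, y)) (P(δ, y))`.
-/

open MeasureTheory Set Filter Topology

theorem integral_Ioi_neg_deriv_of_tendsto_zero {f : ℝ → ℝ} {m : ℝ}
    (hf : ∀ x ∈ Ici m, DifferentiableAt ℝ f x) (hf' : ∀ x ∈ Ioi m, deriv f x ≤ 0)
    (hlim : Tendsto f atTop (𝓝 0)) :
    ∫ a in Ioi m, -deriv f a = f m := by
  rw [integral_neg,
    integral_Ioi_of_hasDerivAt_of_nonpos' (fun x hx => (hf x hx).hasDerivAt) hf' hlim]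
  ring

theorem integral_Ioi_indicator_Ici_neg_deriv {f : ℝ → ℝ} {δ : ℝ} (s : ℝ)
    (hf : ∀ x ∈ Ici δ, DifferentiableAt ℝ f x) (hf' : ∀ x ∈ Ioi δ, deriv f x ≤ 0)
    (hlim : Tendsto f atTop (𝓝 0)) :
    ∫ a in Ioi δ, (Ici s).indicator (fun a => -deriv f a) a = f (max δ s) := by
  rw [setIntegral_indicator measurableSet_Ici,
    setIntegral_congr_set ((ae_eq_refl _).inter Ioi_ae_eq_Ici.symm), Ioi_inter_Ioi]
  exact integral_Ioi_neg_deriv_of_tendsto_zero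
    (fun x hx => hf x (le_trans le_sup_left hx.out))
    (fun x hx => hf' x (lt_of_le_of_lt le_sup_left hx.out)) hlim

theorem indicator_Icc_neg_self_one_apply (a t : ℝ) :
    (Icc (-a) a).indicator (fun _ => (1 : ℝ)) t = (Ici |t|).indicator (fun _ => 1) a := by
  simp only [indicator_apply, mem_Icc, mem_Ici, abs_le]

/-- `halfPlanePoissonKernel y t` is `P(t, y)`; the height comes first, so that
`halfPlanePoissonKernel y` is the function of `t`. -/
noncomputable def halfPlanePoissonKernel (y t : ℝ) : ℝ := y / (Real.pi * (y ^ 2 + t ^ 2))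

section HalfPlanePoissonKernel

variable {y : ℝ}

theorem hasDerivAt_halfPlanePoissonKernel (hy : 0 < y) (t : ℝ) :
    HasDerivAt (halfPlanePoissonKernel y) (-(2 * t * y / (Real.pi * (y ^ 2 + t ^ 2) ^ 2))) t := by
  have hden : Real.pi * (y ^ 2 + t ^ 2) ≠ 0 := by positivity
  have hden' : HasDerivAt (fun u => Real.pi * (y ^ 2 + u ^ 2)) (Real.pi * (2 * t)) t := by
    simpa using ((hasDerivAt_pow 2 t).const_add (y ^ 2)).const_mul Real.pi
  refine ((hasDerivAt_const t y).div hden' hden).congr_deriv ?_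
  field_simp
  ring

theorem deriv_halfPlanePoissonKernel_nonpos (hy : 0 < y) {t : ℝ} (ht : 0 ≤ t) :
    deriv (halfPlanePoissonKernel y) t ≤ 0 := by
  rw [(hasDerivAt_halfPlanePoissonKernel hy t).deriv, neg_nonpos]
  positivity

theorem tendsto_halfPlanePoissonKernel_atTop : Tendsto (halfPlanePoissonKernel y) atTop (𝓝 0) :=
  tendsto_const_nhds.div_atTop <| (tendsto_atTop_add_const_left _ _
    (tendsto_pow_atTop two_ne_zero)).const_mul_atTop Real.pi_pos

theorem halfPlanePoissonKernel_abs (t : ℝ) :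
    halfPlanePoissonKernel y |t| = halfPlanePoissonKernel y t := by
  rw [halfPlanePoissonKernel, halfPlanePoissonKernel, sq_abs]

theorem halfPlanePoissonKernel_le_of_abs_le (hy : 0 < y) {u v : ℝ} (huv : |u| ≤ |v|) :
    halfPlanePoissonKernel y v ≤ halfPlanePoissonKernel y u := by
  have : u ^ 2 ≤ v ^ 2 := sq_le_sq.mpr huv
  unfold halfPlanePoissonKernel
  gcongr

theorem min_halfPlanePoissonKernel (hy : 0 < y) {δ : ℝ} (hδ : 0 ≤ δ) (t : ℝ) :
    min (halfPlanePoissonKernel y t) (halfPlanePoissonKernel y δ) =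
      halfPlanePoissonKernel y (max δ |t|) := by
  rcases le_total δ |t| with h | h
  · rw [max_eq_right h, halfPlanePoissonKernel_abs, min_eq_left]
    exact halfPlanePoissonKernel_le_of_abs_le hy (by rwa [abs_of_nonneg hδ])
  · rw [max_eq_left h, min_eq_right]
    exact halfPlanePoissonKernel_le_of_abs_le hy (by rwa [abs_of_nonneg hδ])

end HalfPlanePoissonKernel

theorem stmt0 (y δ : ℝ) (hy : 0 < y) (hδ : 0 < δ)
    (P : ℝ → ℝ) (hP : ∀ t, P t = y / (Real.pi * (y ^ 2 + t ^ 2)))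
    (P₁ : ℝ → ℝ) (hP₁ : ∀ t, P₁ t = min (P t) (P δ))
    (φ : ℝ → ℝ) (hφ : ∀ a, φ a = -2 * a * deriv P₁ a) :
    ∀ t : ℝ,
      P₁ t = ∫ a in Set.Ioi δ,
        (1 / (2 * a)) * Set.indicator (Set.Icc (-a) a) (fun _ => (1 : ℝ)) t * φ a := by
  obtain rfl : P = halfPlanePoissonKernel y := funext hP
  have hP₁_eq : ∀ t, P₁ t = halfPlanePoissonKernel y (max δ |t|) := fun t =>
    (hP₁ t).trans (min_halfPlanePoissonKernel hy hδ.le t)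
  have hderiv : ∀ a ∈ Ioi δ, deriv P₁ a = deriv (halfPlanePoissonKernel y) a := fun a ha =>
    EventuallyEq.deriv_eq <| by
      filter_upwards [Ioi_mem_nhds ha] with x hx
      rw [hP₁_eq, max_eq_right (hx.out.le.trans (le_abs_self x)), halfPlanePoissonKernel_abs]
  intro t
  have hintegrand : ∀ a ∈ Ioi δ,
      (1 / (2 * a)) * (Icc (-a) a).indicator (fun _ => (1 : ℝ)) t * φ a
        = (Ici |t|).indicator (fun a => -deriv (halfPlanePoissonKernel y) a) a := fun a ha => by
    have ha0 : a ≠ 0 := (hδ.trans ha).ne'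
    rw [hφ, hderiv a ha, indicator_Icc_neg_self_one_apply, indicator_apply, indicator_apply]
    split_ifs
    · field_simp
    · simp
  rw [setIntegral_congr_fun measurableSet_Ioi hintegrand, hP₁_eq,
    integral_Ioi_indicator_Ici_neg_deriv |t|
      (fun x _ => (hasDerivAt_halfPlanePoissonKernel hy x).differentiableAt)
      (fun x hx => deriv_halfPlanePoissonKernel_nonpos hy (hδ.le.trans hx.out.le))
      tendsto_halfPlanePoissonKernel_atTop]
end

section
/- Let f ∈ L¹(ℝ), f ≥ 0, and λ > 0. For R > 0 and θ ∈ (0, π/2], write x = R cos θ, y = R sin θ, δ = R − x, and define P₂(t,y) = (y/π)(1/(y²+t²) − 1/(y²+δ²)) for |t| < δ and 0 otherwise. If ∫_ℝ P₂(x − t, y) f(t) dt > λ, then R < ‖f‖₁ / (2πλ). -/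
/-! The truncated kernel `P₂` is nonnegative and bounded by `δ² / (π y (y² + δ²))`, its value at
`t = 0` with the cutoff `|t| < δ` removed. Since `(x, y)` lies on the circle of radius `R` about
`(R, 0)`, `y² + δ² = 2Rδ`, and `δ ≤ y` for `θ ≤ π/2`, so `P₂ ≤ 1 / (2πR)`. Integrating against
`f` gives `λ < ‖f‖₁ / (2πR)`. -/

open MeasureTheory Real

lemma integral_mul_le_mul_integral {α : Type*} [MeasurableSpace α] {μ : Measure α}
    {K f : α → ℝ} {C : ℝ} (hf : Integrable f μ) (hf0 : ∀ a, 0 ≤ f a)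
    (hK0 : ∀ a, 0 ≤ K a) (hKC : ∀ a, K a ≤ C) :
    ∫ a, K a * f a ∂μ ≤ C * ∫ a, f a ∂μ := by
  rw [← integral_const_mul]
  refine integral_mono_of_nonneg (.of_forall fun a ↦ mul_nonneg (hK0 a) (hf0 a))
    (hf.const_mul C) (.of_forall fun a ↦ ?_)
  exact mul_le_mul_of_nonneg_right (hKC a) (hf0 a)

section PoissonDifference

variable {y δ t : ℝ}

lemma poisson_sub_poisson_nonneg (hy : 0 < y) (ht : |t| < δ) :
    0 ≤ y / π * (1 / (y ^ 2 + t ^ 2) - 1 / (y ^ 2 + δ ^ 2)) := by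
  have htδ : t ^ 2 ≤ δ ^ 2 := sq_le_sq' (abs_lt.mp ht).1.le (abs_lt.mp ht).2.le
  have : 1 / (y ^ 2 + δ ^ 2) ≤ 1 / (y ^ 2 + t ^ 2) :=
    one_div_le_one_div_of_le (by positivity) (by linarith)
  have : 0 ≤ 1 / (y ^ 2 + t ^ 2) - 1 / (y ^ 2 + δ ^ 2) := sub_nonneg.mpr this
  positivity

lemma poisson_sub_poisson_le (hy : 0 < y) :
    y / π * (1 / (y ^ 2 + t ^ 2) - 1 / (y ^ 2 + δ ^ 2)) ≤ δ ^ 2 / (π * y * (y ^ 2 + δ ^ 2)) := by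
  have hyδ : 0 < y ^ 2 + δ ^ 2 := by positivity
  calc y / π * (1 / (y ^ 2 + t ^ 2) - 1 / (y ^ 2 + δ ^ 2))
      ≤ y / π * (1 / y ^ 2 - 1 / (y ^ 2 + δ ^ 2)) := by
        gcongr
        nlinarith
    _ = δ ^ 2 / (π * y * (y ^ 2 + δ ^ 2)) := by
        field_simp
        ring

lemma sq_div_le_of_sq_add_sq_eq {R : ℝ} (hR : 0 < R) (hy : 0 < y) (hδy : δ ≤ y)
    (hcircle : y ^ 2 + δ ^ 2 = 2 * R * δ) :
    δ ^ 2 / (π * y * (y ^ 2 + δ ^ 2)) ≤ 1 / (2 * π * R) := by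
  have hδ : 0 < δ := by nlinarith
  rw [hcircle, div_le_div_iff₀ (by positivity) (by positivity)]
  nlinarith [mul_le_mul_of_nonneg_left hδy (by positivity : 0 ≤ 2 * π * R * δ)]

end PoissonDifference

section CircleGeometry

variable {θ : ℝ}

lemma one_sub_cos_le_sin (h0 : 0 ≤ θ) (hθ : θ ≤ π / 2) : 1 - cos θ ≤ sin θ := by
  have hcos : 0 ≤ cos θ := cos_nonneg_of_mem_Icc ⟨by linarith [pi_pos], hθ⟩
  have hsin : 0 ≤ sin θ := sin_nonneg_of_nonneg_of_le_pi h0 (by linarith [pi_pos])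
  -- `(1 - cos θ)² ≤ (1 - cos θ)(1 + cos θ) = sin² θ`
  nlinarith [sin_sq_add_cos_sq θ, cos_le_one θ]

lemma sq_add_sq_eq_two_mul (R θ : ℝ) :
    (R * sin θ) ^ 2 + (R - R * cos θ) ^ 2 = 2 * R * (R - R * cos θ) := by
  linear_combination R ^ 2 * sin_sq_add_cos_sq θ

end CircleGeometry

theorem stmt6 (f : ℝ → ℝ) (hf : Integrable f) (hf0 : ∀ t, 0 ≤ f t)
    (lam : ℝ) (hlam : 0 < lam)
    (R θ : ℝ) (hR : 0 < R) (hθ₁ : 0 < θ) (hθ₂ : θ ≤ Real.pi / 2)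
    (x y δ : ℝ) (hx : x = R * Real.cos θ) (hy : y = R * Real.sin θ) (hδ : δ = R - x)
    (P₂ : ℝ → ℝ)
    (hP₂ : ∀ t, P₂ t =
      if |t| < δ then (y / Real.pi) * (1 / (y ^ 2 + t ^ 2) - 1 / (y ^ 2 + δ ^ 2)) else 0)
    (h : lam < ∫ t, P₂ (x - t) * f t) :
    R < (∫ t, f t) / (2 * Real.pi * lam) := by
  subst hx hy hδ
  have hy0 : 0 < R * sin θ :=
    mul_pos hR (sin_pos_of_pos_of_lt_pi hθ₁ (by linarith [pi_pos]))
  have hδy : R - R * cos θ ≤ R * sin θ := by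
    nlinarith [one_sub_cos_le_sin hθ₁.le hθ₂]
  have hP₂_nonneg (t : ℝ) : 0 ≤ P₂ t := by
    rw [hP₂]
    split_ifs with ht
    exacts [poisson_sub_poisson_nonneg hy0 ht, le_rfl]
  have hP₂_le (t : ℝ) : P₂ t ≤ 1 / (2 * π * R) := by
    rw [hP₂]
    split_ifs
    · exact (poisson_sub_poisson_le hy0).trans
        (sq_div_le_of_sq_add_sq_eq hR hy0 hδy (sq_add_sq_eq_two_mul R θ))
    · positivity
  have hbound := h.trans_le <| integral_mul_le_mul_integral hf hf0
    (fun t ↦ hP₂_nonneg (R * cos θ - t)) (fun t ↦ hP₂_le (R * cos θ - t))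
  rw [one_div_mul_eq_div, lt_div_iff₀ (by positivity)] at hbound
  rw [lt_div_iff₀ (by positivity)]
  linarith
end

section
/- Let f ∈ L¹(ℝ) with f ≥ 0, let δ > 0, y > 0, x ∈ ℝ, λ > 0, and let P₁(t,y) = min(y/(π(y²+t²)), y/(π(y²+δ²))). If ∫_ℝ P₁(x − t, y) f(t) dt > λ, then there exists a > δ such that (1/(2a)) ∫_{x−a}^{x+a} f(t) dt > λ. -/
/-!
Write `P(t) = y / (π (y² + t²))` for the Poisson kernel of the upper half plane and
`ρ(a) = -P'(a) ≥ 0`. Then `P(t) = ∫_{|t|}^∞ ρ`, so the truncated kernel is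
`P₁(t) = min (P t) (P δ) = ∫_δ^∞ 1_{|t| ≤ a} ρ(a) da`, and by Fubini
`∫ P₁(x - t) f(t) dt = ∫_δ^∞ ρ(a) ∫_{x-a}^{x+a} f da`.
If every centred average of `f` of radius `a > δ` were at most `λ`, this would be at most
`λ ∫_δ^∞ 2a ρ(a) da ≤ λ ∫_0^∞ 2a ρ(a) da = λ ∫_ℝ P = λ`.
-/

open MeasureTheory Set Filter Topology Real

noncomputable def poissonKernelLine (y t : ℝ) : ℝ := y / (π * (y ^ 2 + t ^ 2))

noncomputable def poissonLayerDensity (y a : ℝ) : ℝ := 2 * a * y / (π * (y ^ 2 + a ^ 2) ^ 2)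

section PoissonKernelLine

variable {y : ℝ}

lemma poissonKernelLine_abs (y t : ℝ) : poissonKernelLine y |t| = poissonKernelLine y t := by
  rw [poissonKernelLine, sq_abs, poissonKernelLine]

lemma poissonKernelLine_le_of_sq_le (hy : 0 < y) {s t : ℝ} (h : s ^ 2 ≤ t ^ 2) :
    poissonKernelLine y t ≤ poissonKernelLine y s := by
  unfold poissonKernelLine
  gcongr

lemma poissonLayerDensity_nonneg (hy : 0 ≤ y) {a : ℝ} (ha : 0 ≤ a) :
    0 ≤ poissonLayerDensity y a := by
  unfold poissonLayerDensity; positivity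

lemma hasDerivAt_poissonKernelLine (hy : 0 < y) (a : ℝ) :
    HasDerivAt (poissonKernelLine y) (-poissonLayerDensity y a) a := by
  have hden : HasDerivAt (fun a : ℝ ↦ π * (y ^ 2 + a ^ 2)) (π * (2 * a)) a := by
    simpa using ((hasDerivAt_pow 2 a).const_add (y ^ 2)).const_mul π
  refine ((hasDerivAt_const a y).div hden (by positivity)).congr_deriv ?_
  have := pi_pos
  unfold poissonLayerDensity
  field_simp
  ring

lemma tendsto_poissonKernelLine_atTop (y : ℝ) :
    Tendsto (poissonKernelLine y) atTop (𝓝 0) := by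
  have h : Tendsto (fun a : ℝ ↦ π * (y ^ 2 + a ^ 2)) atTop atTop :=
    (tendsto_atTop_add_const_left _ _ (tendsto_pow_atTop two_ne_zero)).const_mul_atTop pi_pos
  exact tendsto_const_nhds.div_atTop h

lemma integrableOn_Ioi_poissonLayerDensity (hy : 0 < y) {m : ℝ} (hm : 0 ≤ m) :
    IntegrableOn (poissonLayerDensity y) (Ioi m) :=
  integrable_neg_iff.mp <| integrableOn_Ioi_deriv_of_nonpos'
    (fun a _ ↦ hasDerivAt_poissonKernelLine hy a)
    (fun _ ha ↦ neg_nonpos.mpr (poissonLayerDensity_nonneg hy.le (hm.trans (le_of_lt ha))))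
    (tendsto_poissonKernelLine_atTop y)

lemma integral_Ioi_poissonLayerDensity (hy : 0 < y) {m : ℝ} (hm : 0 ≤ m) :
    ∫ a in Ioi m, poissonLayerDensity y a = poissonKernelLine y m := by
  have h := integral_Ioi_of_hasDerivAt_of_nonpos' (fun a _ ↦ hasDerivAt_poissonKernelLine hy a)
    (fun _ ha ↦ neg_nonpos.mpr (poissonLayerDensity_nonneg hy.le (hm.trans (le_of_lt ha))))
    (tendsto_poissonKernelLine_atTop y)
  rwa [integral_neg, zero_sub, neg_inj] at h

lemma setIntegral_Ioi_indicator_poissonLayerDensity (hy : 0 < y) {δ : ℝ} (hδ : 0 ≤ δ) (t : ℝ) :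
    ∫ a in Ioi δ, (Ici |t|).indicator (poissonLayerDensity y) a
      = min (poissonKernelLine y t) (poissonKernelLine y δ) := by
  rw [setIntegral_indicator measurableSet_Ici]
  rcases le_or_gt |t| δ with htδ | hδt
  · rw [inter_eq_left.mpr (Ioi_subset_Ici htδ),
      integral_Ioi_poissonLayerDensity hy hδ, min_eq_right]
    exact poissonKernelLine_le_of_sq_le hy (sq_le_sq.mpr (htδ.trans (le_abs_self δ)))
  · rw [inter_eq_right.mpr (Ici_subset_Ioi.mpr hδt), integral_Ici_eq_integral_Ioi,
      integral_Ioi_poissonLayerDensity hy (abs_nonneg t), poissonKernelLine_abs, min_eq_left]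
    exact poissonKernelLine_le_of_sq_le hy (sq_le_sq.mpr ((abs_of_nonneg hδ).trans_lt hδt).le)

/-- Integration by parts: `∫ 2a ρ(a) da = -2a P(a) + 2 ∫ P`, and `∫ P = (1/π) arctan (a / y)`. -/
lemma hasDerivAt_poissonKernelLine_mass (hy : 0 < y) (a : ℝ) :
    HasDerivAt (fun a ↦ 2 / π * arctan (a / y) - 2 * a * poissonKernelLine y a)
      (2 * a * poissonLayerDensity y a) a := by
  have harctan : HasDerivAt (fun a ↦ 2 / π * arctan (a / y))
      (2 / π * (1 / (1 + (a / y) ^ 2) * (1 / y))) a := by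
    simpa using ((hasDerivAt_arctan (a / y)).comp a
      ((hasDerivAt_id a).div_const y)).const_mul (2 / π)
  have hprod := ((hasDerivAt_id' a).const_mul 2).mul (hasDerivAt_poissonKernelLine hy a)
  refine (harctan.sub hprod).congr_deriv ?_
  have := pi_pos
  have : 1 + (a / y) ^ 2 ≠ 0 := by positivity
  unfold poissonKernelLine poissonLayerDensity
  field_simp
  ring

lemma tendsto_poissonKernelLine_mass_atTop (hy : 0 < y) :
    Tendsto (fun a ↦ 2 / π * arctan (a / y) - 2 * a * poissonKernelLine y a) atTop (𝓝 1) := by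
  have harctan : Tendsto (fun a ↦ 2 / π * arctan (a / y)) atTop (𝓝 (2 / π * (π / 2))) :=
    ((tendsto_arctan_atTop.mono_right nhdsWithin_le_nhds).comp
      (tendsto_id.atTop_div_const hy)).const_mul _
  have hden : Tendsto (fun a : ℝ ↦ π * (y ^ 2 / a + a)) atTop atTop := by
    refine Tendsto.const_mul_atTop pi_pos (tendsto_atTop_mono' _ ?_ tendsto_id)
    filter_upwards [eventually_gt_atTop 0] with a ha
    simpa using (div_nonneg (sq_nonneg y) ha.le)
  have hprod : Tendsto (fun a ↦ 2 * a * poissonKernelLine y a) atTop (𝓝 0) := by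
    refine (tendsto_const_nhds (x := 2 * y)).div_atTop hden |>.congr' ?_
    filter_upwards [eventually_gt_atTop 0] with a ha
    have := pi_pos
    unfold poissonKernelLine
    field_simp
  have hπ : 2 / π * (π / 2) = 1 := by field_simp
  simpa [hπ] using harctan.sub hprod

lemma two_mul_poissonLayerDensity_nonneg (hy : 0 ≤ y) {a : ℝ} (ha : 0 ≤ a) :
    0 ≤ 2 * a * poissonLayerDensity y a :=
  mul_nonneg (by linarith) (poissonLayerDensity_nonneg hy ha)

lemma integrableOn_Ioi_two_mul_poissonLayerDensity (hy : 0 < y) {δ : ℝ} (hδ : 0 ≤ δ) :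
    IntegrableOn (fun a ↦ 2 * a * poissonLayerDensity y a) (Ioi δ) :=
  (integrableOn_Ioi_deriv_of_nonneg' (fun a _ ↦ hasDerivAt_poissonKernelLine_mass hy a)
    (fun _ ha ↦ two_mul_poissonLayerDensity_nonneg hy.le (le_of_lt ha))
    (tendsto_poissonKernelLine_mass_atTop hy)).mono_set (Ioi_subset_Ioi hδ)

lemma setIntegral_Ioi_two_mul_poissonLayerDensity_le_one (hy : 0 < y) {δ : ℝ} (hδ : 0 ≤ δ) :
    ∫ a in Ioi δ, 2 * a * poissonLayerDensity y a ≤ 1 := by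
  have hnonneg : ∀ a ∈ Ioi (0 : ℝ), 0 ≤ 2 * a * poissonLayerDensity y a :=
    fun _ ha ↦ two_mul_poissonLayerDensity_nonneg hy.le (le_of_lt ha)
  have htotal := integral_Ioi_of_hasDerivAt_of_nonneg'
    (fun a _ ↦ hasDerivAt_poissonKernelLine_mass hy a) hnonneg
    (tendsto_poissonKernelLine_mass_atTop hy)
  simp only [zero_div, arctan_zero, mul_zero, zero_mul, sub_self, sub_zero] at htotal
  exact htotal ▸ setIntegral_mono_set (integrableOn_Ioi_two_mul_poissonLayerDensity hy le_rfl)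
    (ae_restrict_of_forall_mem measurableSet_Ioi hnonneg)
    (Ioi_subset_Ioi hδ).eventuallyLE

lemma min_poissonKernelLine_mul_eq_setIntegral (hy : 0 < y) {δ : ℝ} (hδ : 0 ≤ δ) (f : ℝ → ℝ)
    (x t : ℝ) :
    min (poissonKernelLine y (x - t)) (poissonKernelLine y δ) * f t
      = ∫ a in Ioi δ, (Icc (x - a) (x + a)).indicator f t * poissonLayerDensity y a := by
  rw [← setIntegral_Ioi_indicator_poissonLayerDensity hy hδ, ← integral_mul_const]
  congr 1 with a
  simp only [indicator_apply, mem_Ici, ← mem_Icc_iff_abs_le]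
  split_ifs <;> ring

end PoissonKernelLine

lemma integral_setIntegral_indicator_Icc_mul_swap {f w : ℝ → ℝ} {S : Set ℝ} (hf : Integrable f)
    (hw : IntegrableOn w S) (x : ℝ) :
    ∫ t, ∫ a in S, (Icc (x - a) (x + a)).indicator f t * w a
      = ∫ a in S, (∫ t in Icc (x - a) (x + a), f t) * w a := by
  have hT : MeasurableSet {p : ℝ × ℝ | p.1 ∈ Icc (x - p.2) (x + p.2)} :=
    (measurableSet_le (by fun_prop) measurable_fst).inter
      (measurableSet_le measurable_fst (by fun_prop))
  have hind : (Function.uncurry fun t a ↦ (Icc (x - a) (x + a)).indicator f t * w a)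
      = {p : ℝ × ℝ | p.1 ∈ Icc (x - p.2) (x + p.2)}.indicator fun p ↦ f p.1 * w p.2 := by
    ext ⟨t, a⟩
    simp only [Function.uncurry_apply_pair, indicator_apply, mem_ofPred_eq]
    split_ifs <;> ring
  have hint : Integrable (Function.uncurry fun t a ↦ (Icc (x - a) (x + a)).indicator f t * w a)
      (volume.prod (volume.restrict S)) :=
    hind ▸ (hf.mul_prod hw).indicator hT
  rw [integral_integral_swap hint]
  simp_rw [integral_mul_const, integral_indicator measurableSet_Icc]

lemma setIntegral_Icc_le_of_average_le {f : ℝ → ℝ} {x a c : ℝ} (ha : 0 < a)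
    (h : 1 / (2 * a) * ∫ t in (x - a)..(x + a), f t ≤ c) :
    ∫ t in Icc (x - a) (x + a), f t ≤ 2 * a * c := by
  rwa [intervalIntegral.integral_of_le (by linarith), ← integral_Icc_eq_integral_Ioc, one_div,
    inv_mul_le_iff₀ (by linarith)] at h

theorem stmt18 (f : ℝ → ℝ) (hf : Integrable f) (hf0 : ∀ t, 0 ≤ f t)
    (δ y x lam : ℝ) (hδ : 0 < δ) (hy : 0 < y) (hlam : 0 < lam)
    (P₁ : ℝ → ℝ)
    (hP₁ : ∀ t, P₁ t = min (y / (Real.pi * (y ^ 2 + t ^ 2))) (y / (Real.pi * (y ^ 2 + δ ^ 2))))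
    (h : lam < ∫ t, P₁ (x - t) * f t) :
    ∃ a : ℝ, δ < a ∧ lam < (1 / (2 * a)) * ∫ t in (x - a)..(x + a), f t := by
  by_contra! hcon
  set ρ := poissonLayerDensity y
  have hbox : ∀ a ∈ Ioi δ, (∫ t in Icc (x - a) (x + a), f t) * ρ a ≤ lam * (2 * a * ρ a) := by
    intro a ha
    calc _ ≤ 2 * a * lam * ρ a :=
          mul_le_mul_of_nonneg_right (setIntegral_Icc_le_of_average_le (hδ.trans ha) (hcon a ha))
            (poissonLayerDensity_nonneg hy.le (hδ.le.trans ha.le))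
      _ = lam * (2 * a * ρ a) := by ring
  have hrep (t : ℝ) :
      P₁ (x - t) * f t = ∫ a in Ioi δ, (Icc (x - a) (x + a)).indicator f t * ρ a :=
    (hP₁ (x - t)).symm ▸ min_poissonKernelLine_mul_eq_setIntegral hy hδ.le f x t
  refine h.not_ge ?_
  calc
    ∫ t, P₁ (x - t) * f t = ∫ a in Ioi δ, (∫ t in Icc (x - a) (x + a), f t) * ρ a := by
      simp_rw [hrep]
      exact integral_setIntegral_indicator_Icc_mul_swap hf
        (integrableOn_Ioi_poissonLayerDensity hy hδ.le) x
    _ ≤ ∫ a in Ioi δ, lam * (2 * a * ρ a) := by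
      refine integral_mono_of_nonneg ?_ ((integrableOn_Ioi_two_mul_poissonLayerDensity hy
        hδ.le).const_mul lam) (ae_restrict_of_forall_mem measurableSet_Ioi hbox)
      exact ae_restrict_of_forall_mem measurableSet_Ioi fun a ha ↦ mul_nonneg
        (setIntegral_nonneg measurableSet_Icc fun t _ ↦ hf0 t)
        (poissonLayerDensity_nonneg hy.le (hδ.le.trans ha.le))
    _ = lam * ∫ a in Ioi δ, 2 * a * ρ a := integral_const_mul lam _
    _ ≤ lam := mul_le_of_le_one_right hlam.le
      (setIntegral_Ioi_two_mul_poissonLayerDensity_le_one hy hδ.le)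
end
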